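/- arXiv:0906.4932 — 2 statements merged into one kernel-verified Lean document; each statement's English description precedes it below -/
import Mathlib

section
/- Neither 1+√-7 nor 1-√-7 is a cube in the field ℚ(√-7). -/
/-!
If `(a + b√-7)³ = 1 ± √-7` with `a, b ∈ ℚ`, taking norms gives `(a² + 7b²)³ = 8`, so
`a² + 7b² = 2`. Substituting `7b² = 2 - a²` into the rational part `a³ - 21ab² = 1` yields
`4a³ - 6a - 1 = 0`, i.e. `y = 2a` is a rational root of the monic integer polynomial
`y³ - 6y - 2`. Such a root is an integer dividing `2`, and none of `±1, ±2` is a root.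
-/

open Polynomial

section QuadraticExtension

variable {K L : Type*} [Field K] [Field L] [Algebra K L] {s : L} {d : K}

theorem exists_eq_add_mul_of_mem_adjoin (hs : s ^ 2 = algebraMap K L d) {w : L}
    (hw : w ∈ IntermediateField.adjoin K ({s} : Set L)) :
    ∃ a b : K, w = algebraMap K L a + algebraMap K L b * s := by
  have hint : IsIntegral K s :=
    ⟨X ^ 2 - C d, monic_X_pow_sub_C d two_ne_zero, by simp [hs]⟩
  rw [← IntermediateField.mem_toSubalgebra,
    IntermediateField.adjoin_simple_toSubalgebra_of_isAlgebraic hint.isAlgebraic] at hw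
  induction hw using Algebra.adjoin_induction with
  | mem x hx =>
    rw [Set.mem_singleton_iff.mp hx]
    exact ⟨0, 1, by simp⟩
  | algebraMap r => exact ⟨r, 0, by simp⟩
  | add x y _ _ ihx ihy =>
    obtain ⟨a, b, rfl⟩ := ihx
    obtain ⟨c, e, rfl⟩ := ihy
    exact ⟨a + c, b + e, by simp only [map_add]; ring⟩
  | mul x y _ _ ihx ihy =>
    obtain ⟨a, b, rfl⟩ := ihx
    obtain ⟨c, e, rfl⟩ := ihy
    refine ⟨a * c + d * b * e, a * e + b * c, ?_⟩
    simp only [map_add, map_mul]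
    linear_combination (algebraMap K L b * algebraMap K L e) * hs

theorem add_mul_inj_of_notMem_range (hs : s ∉ Set.range (algebraMap K L)) {a b c e : K}
    (h : algebraMap K L a + algebraMap K L b * s = algebraMap K L c + algebraMap K L e * s) :
    a = c ∧ b = e := by
  obtain rfl : b = e := by
    by_contra hbe
    have hbe' : algebraMap K L (b - e) ≠ 0 := by simpa [sub_eq_zero] using hbe
    refine hs ⟨(c - a) / (b - e), ?_⟩
    rw [map_div₀, div_eq_iff hbe']
    simp only [map_sub]
    linear_combination -h
  exact ⟨(algebraMap K L).injective (add_right_cancel h), rfl⟩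

theorem add_mul_pow_three (hs : s ^ 2 = algebraMap K L d) (a b : K) :
    (algebraMap K L a + algebraMap K L b * s) ^ 3 =
      algebraMap K L (a ^ 3 + 3 * d * a * b ^ 2) +
        algebraMap K L (3 * a ^ 2 * b + d * b ^ 3) * s := by
  simp only [map_add, map_mul, map_pow, map_ofNat]
  linear_combination (3 * algebraMap K L a * algebraMap K L b ^ 2
    + algebraMap K L b ^ 3 * s) * hs

end QuadraticExtension

theorem rat_pow_three_sub_six_mul_sub_two_ne_zero (y : ℚ) : y ^ 3 - 6 * y - 2 ≠ 0 := by
  intro hy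
  have hmonic : (X ^ 3 - C 6 * X - C 2 : ℤ[X]).Monic := by monicity!
  obtain ⟨n, rfl⟩ : ∃ n : ℤ, (n : ℚ) = y :=
    isInteger_of_is_root_of_monic hmonic (by simpa [map_ofNat] using hy)
  have hn : n * (n ^ 2 - 6) = 2 := by
    have : ((n ^ 3 - 6 * n - 2 : ℤ) : ℚ) = 0 := by push_cast; exact hy
    linear_combination (Int.cast_eq_zero.mp this)
  have hle : n.natAbs ≤ 2 :=
    Nat.le_of_dvd two_pos (Int.natAbs_dvd_natAbs.mpr ⟨_, hn.symm⟩)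
  have hlo : -2 ≤ n := by omega
  have hhi : n ≤ 2 := by omega
  interval_cases n <;> norm_num at hn

theorem not_rat_cube_coords_eq_one (a b : ℚ) :
    ¬ (a ^ 3 - 21 * a * b ^ 2 = 1 ∧ (3 * a ^ 2 * b - 7 * b ^ 3) ^ 2 = 1) := by
  rintro ⟨hre, him⟩
  have hnorm : (a ^ 2 + 7 * b ^ 2) ^ 3 = 2 ^ 3 := by
    linear_combination (a ^ 3 - 21 * a * b ^ 2 + 1) * hre + 7 * him
  have htwo : a ^ 2 + 7 * b ^ 2 = 2 :=
    (pow_left_inj₀ (by positivity) (by norm_num) (by norm_num)).mp hnorm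
  exact rat_pow_three_sub_six_mul_sub_two_ne_zero (2 * a)
    (by linear_combination 2 * hre + 6 * a * htwo)

theorem not_exists_pow_three_eq_one_add_mul {L : Type*} [Field L] [Algebra ℚ L] {s : L}
    (hs : s ^ 2 = -7) {e : ℚ} (he : e ^ 2 = 1) :
    ¬ ∃ w ∈ IntermediateField.adjoin ℚ ({s} : Set L),
      w ^ 3 = 1 + algebraMap ℚ L e * s := by
  have hs' : s ^ 2 = algebraMap ℚ L (-7) := by simpa using hs
  have hirr : s ∉ Set.range (algebraMap ℚ L) := by
    rintro ⟨q, rfl⟩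
    have : q ^ 2 = -7 := (algebraMap ℚ L).injective (by simpa using hs)
    nlinarith [sq_nonneg q]
  rintro ⟨w, hw, hcube⟩
  obtain ⟨a, b, rfl⟩ := exists_eq_add_mul_of_mem_adjoin hs' hw
  rw [add_mul_pow_three hs', ← map_one (algebraMap ℚ L)] at hcube
  obtain ⟨hre, him⟩ := add_mul_inj_of_notMem_range hirr hcube
  refine not_rat_cube_coords_eq_one a b ⟨by linear_combination hre, ?_⟩
  rw [← he]
  congr 1
  linear_combination him

/-- Neither 1+√-7 nor 1-√-7 is a cube in the field ℚ(√-7) ⊆ ℂ. -/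
theorem stmt1 (s : ℂ) (hs : s ^ 2 = -7) :
    (¬ ∃ w ∈ IntermediateField.adjoin ℚ ({s} : Set ℂ), w ^ 3 = 1 + s) ∧
      (¬ ∃ w ∈ IntermediateField.adjoin ℚ ({s} : Set ℂ), w ^ 3 = 1 - s) := by
  constructor
  · simpa using not_exists_pow_three_eq_one_add_mul hs (e := 1) (by norm_num)
  · simpa [sub_eq_add_neg] using not_exists_pow_three_eq_one_add_mul hs (e := -1) (by norm_num)
end

section
/- For k = ℚ(√6), the completion ℓ_{𝔳₂} := k_{𝔳₂} ⊗_k ℓ at the unique place 𝔳₂ of k over 2 is an unramified field extension of k_{𝔳₂}, where ℓ = ℚ(√6, ζ₃). -/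
/-!
Since `6 = 2 · 3` and `√6² = 6`, the ideal `𝔞 = (2, √6)` of `k = ℚ(√6)` satisfies `𝔞² = (2)`, so
`N𝔞 = 2` and every prime `𝔭 ∋ 2` of `k` has residue field `𝔽₂`. The cube root of unity `ζ₃ ∈ 𝓞 ℓ`
is a root of `X² + X + 1`, which has no root in `𝔽₂`; hence no prime of `ℓ` above `𝔭` has inertia
degree 1. As `[ℓ : k] = 2`, the fundamental identity `∑ e_P f_P = 2` then leaves a single prime
`P` above `𝔭`, with `e_P = 1` and `f_P = 2`.
-/

open NumberField Module Ideal Polynomial IntermediateField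

section Residue

theorem sq_add_self_add_one_ne_zero_of_natCard_eq_two {R : Type*} [Ring R]
    (hR : Nat.card R = 2) (c : R) : c ^ 2 + c + 1 ≠ 0 := by
  have : Finite R := Nat.finite_of_card_ne_zero (by omega)
  let := Fintype.ofFinite R
  let e := ZMod.ringEquivOfPrime R Nat.prime_two (Nat.card_eq_fintype_card (α := R) ▸ hR)
  obtain ⟨d, rfl⟩ := e.surjective c
  have key : ∀ d : ZMod 2, d ^ 2 + d + 1 ≠ 0 := by decide
  rw [← map_pow, ← map_one e, ← map_add, ← map_add, map_ne_zero_iff _ e.injective]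
  exact key d

variable {R S : Type*} [CommRing R] [CommRing S] [Algebra R S]

theorem Ideal.Quotient.algebraMap_surjective_of_inertiaDeg_eq_one (p : Ideal R) (q : Ideal S)
    [p.IsMaximal] [q.IsMaximal] [q.LiesOver p] (h : q.inertiaDeg R = 1) :
    Function.Surjective (algebraMap (R ⧸ p) (S ⧸ q)) := by
  let : Field (R ⧸ p) := Quotient.field p
  rw [inertiaDeg_eq_of_isMaximal p q] at h
  intro y
  obtain ⟨c, hc⟩ := (finrank_eq_one_iff_of_nonzero' (1 : S ⧸ q) one_ne_zero).mp h y
  exact ⟨c, by rw [← hc, Algebra.smul_def, mul_one]⟩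

theorem Ideal.two_le_inertiaDeg_of_sq_add_self_add_one_eq_zero [Module.Finite R S]
    {p : Ideal R} [p.IsMaximal] (hp : Nat.card (R ⧸ p) = 2) {w : S} (hw : w ^ 2 + w + 1 = 0)
    {q : Ideal S} (hq : q ∈ p.primesOver S) : 2 ≤ q.inertiaDeg R := by
  obtain ⟨_, _⟩ := hq
  have : q.IsMaximal := .of_liesOver_isMaximal q p
  by_contra! hlt
  have hone : q.inertiaDeg R = 1 := by have := inertiaDeg_pos q R; omega
  obtain ⟨c, hc⟩ :=
    Quotient.algebraMap_surjective_of_inertiaDeg_eq_one p q hone (Quotient.mk q w)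
  let : Field (R ⧸ p) := Quotient.field p
  apply sq_add_self_add_one_ne_zero_of_natCard_eq_two hp c
  apply (algebraMap (R ⧸ p) (S ⧸ q)).injective
  rw [map_add, map_add, map_pow, map_one, hc, map_zero]
  simpa using congrArg (Quotient.mk q) hw

end Residue

theorem Ideal.inert_of_finrank_eq_two_of_two_le_inertiaDeg {R S : Type*} [CommRing R]
    [IsDomain R] [CommRing S] [Algebra R S] [Module.Finite R S] [Module.Flat R S]
    (p : Ideal R) [p.IsPrime] (hrank : finrank R S = 2)
    (hf : ∀ q ∈ p.primesOver S, 2 ≤ q.inertiaDeg R) :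
    (p.primesOver S).Subsingleton ∧
      ∀ q ∈ p.primesOver S, q.ramificationIdx R = 1 ∧ q.inertiaDeg R = 2 := by
  let := (Algebra.QuasiFinite.finite_primesOver (S := S) p).fintype
  have hsum := sum_ramification_inertia_eq_finrank p S
  rw [hrank] at hsum
  have hterm (q : p.primesOver S) : 2 ≤ q.1.ramificationIdx R * q.1.inertiaDeg R := by
    have := q.2.1
    exact (hf q q.2).trans (Nat.le_mul_of_pos_left _ (ramificationIdx_pos q.1 R))
  have hcard : Fintype.card (p.primesOver S) ≤ 1 := by
    have := Finset.card_nsmul_le_sum Finset.univ _ 2 fun q _ ↦ hterm q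
    rw [hsum, smul_eq_mul, Finset.card_univ] at this
    omega
  refine ⟨fun q hq q' hq' ↦ congrArg Subtype.val
    (Fintype.card_le_one_iff.mp hcard ⟨q, hq⟩ ⟨q', hq'⟩), fun q hq ↦ ?_⟩
  have hle : q.ramificationIdx R * q.inertiaDeg R ≤ 2 := hsum ▸ Finset.single_le_sum
    (f := fun q : p.primesOver S ↦ q.1.ramificationIdx R * q.1.inertiaDeg R)
    (fun _ _ ↦ Nat.zero_le _) (Finset.mem_univ ⟨q, hq⟩)
  have := hq.1
  have he := ramificationIdx_pos q R
  have hfq := hf q hq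
  constructor <;> nlinarith

theorem NumberField.inert_of_finrank_eq_two_of_two_le_inertiaDeg'
    {K L : Type*} [Field K] [Field L] [NumberField K] [NumberField L] [Algebra K L]
    (hrank : finrank K L = 2) {𝔭 : Ideal (𝓞 K)} [𝔭.IsPrime] (hbot : 𝔭 ≠ ⊥)
    (hf : ∀ P ∈ 𝔭.primesOver (𝓞 L), 2 ≤ P.inertiaDeg (𝓞 K)) :
    (∃! P : Ideal (𝓞 L), P.IsPrime ∧ P ≠ ⊥ ∧ P.comap (algebraMap (𝓞 K) (𝓞 L)) = 𝔭) ∧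
      ∀ P : Ideal (𝓞 L), P.IsPrime → P ≠ ⊥ → P.comap (algebraMap (𝓞 K) (𝓞 L)) = 𝔭 →
        ramificationIdx' 𝔭 P = 1 ∧ inertiaDeg' 𝔭 P = 2 := by
  have hmem {P : Ideal (𝓞 L)} (hP : P.IsPrime) (hcomap : P.comap (algebraMap (𝓞 K) (𝓞 L)) = 𝔭) :
      P ∈ 𝔭.primesOver (𝓞 L) := ⟨hP, ⟨hcomap.symm⟩⟩
  obtain ⟨hsub, hef⟩ := Ideal.inert_of_finrank_eq_two_of_two_le_inertiaDeg 𝔭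
    ((IsFractionRing.finrank_eq (𝓞 K) K (𝓞 L) L).symm.trans hrank) hf
  obtain ⟨Q, hQ, hQ𝔭⟩ := (inferInstance : Nonempty (𝔭.primesOver (𝓞 L)))
  have hQbot : Q ≠ ⊥ := ne_bot_of_liesOver_of_ne_bot hbot Q
  refine ⟨⟨Q, ⟨hQ, hQbot, hQ𝔭.over.symm⟩, fun P ⟨hP, _, hcomap⟩ ↦
    hsub (hmem hP hcomap) ⟨hQ, hQ𝔭⟩⟩, fun P hP _ hcomap ↦ ?_⟩
  have : P.LiesOver 𝔭 := ⟨hcomap.symm⟩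
  have : 𝔭.IsMaximal := IsPrime.isMaximal ‹_› hbot
  have : P.IsMaximal := .of_liesOver_isMaximal P 𝔭
  rw [ramificationIdx'_eq_ramificationIdx 𝔭 P hbot, inertiaDeg'_eq_inertiaDeg]
  exact hef P (hmem hP hcomap)

theorem Rat.sq_ne_six (b : ℚ) : b ^ 2 ≠ 6 := by
  intro hb
  obtain ⟨n, hn⟩ : IsSquare (6 : ℤ) := (Rat.isSquare_iff (q := 6)).mp ⟨b, by rw [← hb, sq]⟩ |>.1
  obtain ⟨h1, h2⟩ : -3 ≤ n ∧ n ≤ 3 := by constructor <;> nlinarith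
  interval_cases n <;> omega

theorem IntermediateField.finrank_adjoin_of_sq_eq_six {L : Type*} [Field L] [CharZero L] {r : L}
    (hr : r ^ 2 = 6) : finrank ℚ ℚ⟮r⟯ = 2 := by
  have hirr : Irreducible (X ^ 2 - C 6 : ℚ[X]) :=
    X_pow_sub_C_irreducible_of_prime Nat.prime_two Rat.sq_ne_six
  have hmin : minpoly ℚ r = X ^ 2 - C 6 :=
    (minpoly.eq_of_irreducible_of_monic hirr (by simp [hr]) (monic_X_pow_sub_C _ two_ne_zero)).symm
  have hint : IsIntegral ℚ r := ⟨_, monic_X_pow_sub_C (6 : ℚ) two_ne_zero, by simp [hr]⟩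
  rw [adjoin.finrank hint, hmin, natDegree_X_pow_sub_C]

theorem Ideal.span_pair_two_mul_self_of_sq_eq_six {R : Type*} [CommRing R] {x : R}
    (hx : x ^ 2 = 6) : span {2, x} * span {2, x} = span {(2 : R)} := by
  rw [span_pair_mul_span_pair]
  apply le_antisymm
  · simp only [span_le, Set.insert_subset_iff, Set.singleton_subset_iff, SetLike.mem_coe,
      mem_span_singleton]
    refine ⟨⟨2, rfl⟩, ⟨x, rfl⟩, ⟨x, mul_comm _ _⟩, ⟨3, ?_⟩⟩
    linear_combination hx
  · have h2 : x * x - 2 * 2 = (2 : R) := by linear_combination hx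
    rw [span_singleton_le_iff_mem]
    simpa only [h2] using sub_mem
      (subset_span (by simp) : x * x ∈ span {2 * 2, 2 * x, x * 2, x * x})
      (subset_span (by simp) : 2 * 2 ∈ span {2 * 2, 2 * x, x * 2, x * x})

theorem NumberField.absNorm_eq_two_of_sq_eq_six {K : Type*} [Field K] [NumberField K]
    (hK : finrank ℚ K = 2) {x : 𝓞 K} (hx : x ^ 2 = 6) {𝔭 : Ideal (𝓞 K)} [𝔭.IsPrime]
    (h2 : 2 ∈ 𝔭) : absNorm 𝔭 = 2 := by
  have hx𝔭 : x ∈ 𝔭 := IsPrime.mem_of_pow_mem ‹_› 2 <| by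
    rw [hx, show (6 : 𝓞 K) = 2 * 3 by norm_num]
    exact mul_mem_right _ _ h2
  have hle : span {2, x} ≤ 𝔭 := by
    rw [span_le, Set.insert_subset_iff, Set.singleton_subset_iff]
    exact ⟨h2, hx𝔭⟩
  have hsq : absNorm (span {2, x}) * absNorm (span {2, x}) = 2 * 2 := by
    rw [← map_mul, span_pair_two_mul_self_of_sq_eq_six hx, ← Nat.cast_ofNat, absNorm_span_natCast,
      RingOfIntegers.rank, hK, sq]
  have hdvd : absNorm 𝔭 ∣ 2 := Nat.mul_self_inj.mp hsq ▸ absNorm_dvd_absNorm_of_le hle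
  refine (Nat.prime_two.eq_one_or_self_of_dvd _ hdvd).resolve_left fun h ↦ ?_
  exact IsPrime.ne_top ‹_› (absNorm_eq_one_iff.mp h)

theorem IsPrimitiveRoot.sq_add_self_add_one_eq_zero {R : Type*} [CommRing R] [IsDomain R] {z : R}
    (hz : IsPrimitiveRoot z 3) : z ^ 2 + z + 1 = 0 := by
  have h := hz.geom_sum_eq_zero (by norm_num)
  simp only [Finset.sum_range_succ, Finset.sum_range_zero] at h
  linear_combination h

/-- For k = ℚ(√6) and ℓ = ℚ(√6, ζ₃), the place 𝔳₂ of k over 2 does not split in ℓ and is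
unramified there: every nonzero prime 𝔭 of 𝓞_k containing 2 has a unique prime P of 𝓞_ℓ
above it, and that prime has ramification index 1 and inertia degree 2 over 𝔭 (so
ℓ ⊗_k k_{𝔳₂} is an unramified quadratic field extension of k_{𝔳₂}). -/
theorem stmt15 (ℓ : Type) [Field ℓ] [NumberField ℓ] (r6 z : ℓ)
    (h6 : r6 ^ 2 = 6) (hz : IsPrimitiveRoot z 3) (hdim : Module.finrank ℚ ℓ = 4) :
    ∀ 𝔭 : Ideal (𝓞 (IntermediateField.adjoin ℚ ({r6} : Set ℓ))),
      𝔭.IsPrime → 𝔭 ≠ ⊥ → (2 : 𝓞 (IntermediateField.adjoin ℚ ({r6} : Set ℓ))) ∈ 𝔭 →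
      (∃! P : Ideal (𝓞 ℓ), P.IsPrime ∧ P ≠ ⊥ ∧
        P.comap (algebraMap (𝓞 (IntermediateField.adjoin ℚ ({r6} : Set ℓ))) (𝓞 ℓ)) = 𝔭) ∧
      (∀ P : Ideal (𝓞 ℓ), P.IsPrime → P ≠ ⊥ →
        P.comap (algebraMap (𝓞 (IntermediateField.adjoin ℚ ({r6} : Set ℓ))) (𝓞 ℓ)) = 𝔭 →
        Ideal.ramificationIdx' 𝔭 P = 1 ∧
        Ideal.inertiaDeg' 𝔭 P = 2) := by
  intro 𝔭 hp hbot h2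
  have hK : finrank ℚ ℚ⟮r6⟯ = 2 := finrank_adjoin_of_sq_eq_six h6
  have hrank : finrank ℚ⟮r6⟯ ℓ = 2 := by
    have := finrank_mul_finrank ℚ ℚ⟮r6⟯ ℓ
    rw [hK, hdim] at this
    omega
  obtain ⟨x, hx⟩ : ∃ x : 𝓞 ℚ⟮r6⟯, x ^ 2 = 6 := by
    have hgen : AdjoinSimple.gen ℚ r6 ^ 2 = 6 := Subtype.ext (by push_cast; exact h6)
    exact ⟨⟨AdjoinSimple.gen ℚ r6, X ^ 2 - C 6, monic_X_pow_sub_C _ two_ne_zero, by simp [hgen]⟩,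
      RingOfIntegers.ext hgen⟩
  obtain ⟨w, hw⟩ : ∃ w : 𝓞 ℓ, w ^ 2 + w + 1 = 0 :=
    ⟨⟨z, hz.isIntegral three_pos⟩,
      RingOfIntegers.ext (by push_cast; exact hz.sq_add_self_add_one_eq_zero)⟩
  have h𝔭 : Nat.card (𝓞 ℚ⟮r6⟯ ⧸ 𝔭) = 2 := by
    rw [← Submodule.cardQuot_apply, ← absNorm_apply, absNorm_eq_two_of_sq_eq_six hK hx h2]
  have : 𝔭.IsMaximal := hp.isMaximal hbot
  exact inert_of_finrank_eq_two_of_two_le_inertiaDeg' hrank hbot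
    fun P hP ↦ two_le_inertiaDeg_of_sq_add_self_add_one_eq_zero h𝔭 hw hP
end
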